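/- arXiv:2307.05885 — 3 statements merged into one kernel-verified Lean document; each statement's English description precedes it below -/
import Mathlib

section
/- Let f be the endomorphism of the affine plane over the algebraic closure of F_p(t) defined by f(x,y) = (t·x, (1−t)·y), let V be the line {x + y = 1}, and let e = (1,1). Then the return set {n ≥ 0 : f^n(e) ∈ V} equals {p^n : n ≥ 0}. -/
/-!
Since `fⁿ(1, 1) = (tⁿ, (1 - t)ⁿ)` and `t` is transcendental over `𝔽_p`, the return condition is the
polynomial identity `Xⁿ + (1 - X)ⁿ = 1` in `𝔽_p[X]`. For `n = p ^ j` it is additivity of Frobenius.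
Conversely, write `n = p ^ j * m` with `p ∤ m`: injectivity of Frobenius on `𝔽_p[X]` gives
`Xᵐ + (1 - X)ᵐ = 1`, and for `m ≥ 2` the coefficient of `X` on the left is `-m ≠ 0`.
-/

open Polynomial

theorem natCast_eq_zero_of_X_pow_add_one_sub_X_pow_eq_one {R : Type*} [CommRing R] {m : ℕ}
    (hm : 2 ≤ m) (h : (X : R[X]) ^ m + (1 - X) ^ m = 1) : (m : R) = 0 := by
  have h' := congrArg (fun q => (derivative q).eval 0) h
  simp only [derivative_add, derivative_pow, derivative_sub, derivative_one, derivative_X,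
    eval_add, eval_mul, eval_pow, eval_C, eval_X, eval_sub, eval_one, eval_zero] at h'
  rw [zero_pow (by omega : m - 1 ≠ 0)] at h'
  linear_combination -h'

theorem X_pow_add_one_sub_X_pow_eq_one_iff {R : Type*} [CommRing R] [IsDomain R] (p : ℕ)
    [Fact p.Prime] [CharP R p] {n : ℕ} :
    (X : R[X]) ^ n + (1 - X) ^ n = 1 ↔ ∃ j, n = p ^ j := by
  have hp : p.Prime := Fact.out
  constructor
  · intro h
    have hn : n ≠ 0 := by
      rintro rfl
      simp at h
    obtain ⟨j, m, hpm, rfl⟩ := Nat.exists_eq_pow_mul_and_not_dvd hn p hp.ne_one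
    have hm : (X : R[X]) ^ m + (1 - X) ^ m = 1 := by
      apply iterateFrobenius_inj R[X] p j
      rw [map_one, iterateFrobenius_def, add_pow_char_pow, ← pow_mul, ← pow_mul, mul_comm m, h]
    have hm1 : m = 1 := by
      by_contra hm1
      have hm0 : m ≠ 0 := by
        rintro rfl
        simp at hpm
      exact hpm ((CharP.cast_eq_zero_iff R p m).mp
        (natCast_eq_zero_of_X_pow_add_one_sub_X_pow_eq_one (by omega) hm))
    exact ⟨j, by rw [hm1, mul_one]⟩
  · rintro ⟨j, rfl⟩
    rw [← add_pow_char_pow, add_sub_cancel, one_pow]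

/-- DML fails in positive characteristic: for `f(x,y) = (t·x, (1−t)·y)` on the affine
plane over the algebraic closure of `F_p(t)`, `V = {x + y = 1}` and `e = (1,1)`,
the return set `{n : fⁿ(e) ∈ V}` is exactly the set of powers of `p`. -/
theorem stmt0 (p : ℕ) [Fact p.Prime] :
    let k := AlgebraicClosure (RatFunc (ZMod p))
    let t : k := algebraMap (RatFunc (ZMod p)) k RatFunc.X
    let f : k × k → k × k := fun z => (t * z.1, (1 - t) * z.2)
    {n : ℕ | (f^[n] (1, 1)).1 + (f^[n] (1, 1)).2 = 1} = {m : ℕ | ∃ j : ℕ, m = p ^ j} := by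
  intro k t f
  have hf (n : ℕ) : f^[n] (1, 1) = (t ^ n, (1 - t) ^ n) := by
    change (Prod.map (t * ·) ((1 - t) * ·))^[n] (1, 1) = _
    rw [Prod.map_iterate, Prod.map_apply, mul_left_iterate_apply_one, mul_left_iterate_apply_one]
  let φ : (ZMod p)[X] →+* k :=
    (algebraMap (RatFunc (ZMod p)) k).comp (algebraMap (ZMod p)[X] (RatFunc (ZMod p)))
  have hφ : Function.Injective φ :=
    (algebraMap (RatFunc (ZMod p)) k).injective.comp (RatFunc.algebraMap_injective (ZMod p))
  have hφX : φ X = t := congrArg (algebraMap (RatFunc (ZMod p)) k) RatFunc.algebraMap_X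
  ext n
  rw [Set.mem_ofPred_eq, Set.mem_ofPred_eq, hf,
    ← X_pow_add_one_sub_X_pow_eq_one_iff (R := ZMod p) p, ← hφ.eq_iff]
  simp only [map_add, map_pow, map_sub, map_one, hφX]
end

section
/- In characteristic p > 0, for every m ≥ 0, the identity t^{p^m} + (1−t)^{p^m} = 1 holds in F_p[t]; conversely, if n ≥ 1 is not a power of p then t^n + (1−t)^n ≠ 1 in F_p[t]. -/
/-!
Frobenius gives `t^q + (1 - t)^q = (t + (1 - t))^q = 1` for `q = p^m`. Conversely, write
`n = p^m * r` with `p ∤ r` and `r ≥ 2`. Again by Frobenius, `t^n + (1 - t)^n` is the expansion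
`t ↦ t^(p^m)` of `t^r + (1 - t)^r`, and expansion is injective, so it suffices that
`t^r + (1 - t)^r ≠ 1`: its coefficient of `t` is `-r ≠ 0`.
-/

open Polynomial

section ExpChar

variable {R : Type*} [CommRing R] (p : ℕ) [ExpChar R p]

theorem pow_expChar_pow_add_one_sub_pow (x : R) (m : ℕ) :
    x ^ p ^ m + (1 - x) ^ p ^ m = 1 := by
  rw [← add_pow_expChar_pow, add_sub_cancel, one_pow]

theorem expand_X_pow_add_one_sub_X_pow (m r : ℕ) :
    expand R (p ^ m) (X ^ r + (1 - X) ^ r) = X ^ (p ^ m * r) + (1 - X) ^ (p ^ m * r) := by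
  rw [map_add, map_pow, map_pow, map_sub, map_one, expand_X, pow_mul, pow_mul,
    sub_pow_expChar_pow, one_pow]

end ExpChar

theorem coeff_one_sub_X_pow_one {R : Type*} [CommRing R] (r : ℕ) :
    ((1 - X : R[X]) ^ r).coeff 1 = -r := by
  induction r with
  | zero => simp [coeff_one]
  | succ k ih =>
    rw [pow_succ, mul_sub, mul_one, coeff_sub, coeff_mul_X, ih, coeff_zero_eq_eval_zero]
    simp
    ring

theorem X_pow_add_one_sub_X_pow_ne_one {R : Type*} [CommRing R] {r : ℕ} (hr : 2 ≤ r)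
    (hr0 : (r : R) ≠ 0) : (X : R[X]) ^ r + (1 - X) ^ r ≠ 1 := by
  intro h
  have h1 := congrArg (coeff · 1) h
  simp only [coeff_add, coeff_X_pow, coeff_one_sub_X_pow_one, coeff_one] at h1
  simp [show 1 ≠ r by omega, hr0] at h1

theorem X_pow_add_one_sub_X_pow_ne_one_of_ne_pow {R : Type*} [CommRing R] {p : ℕ}
    (hp : p.Prime) [CharP R p] {n : ℕ} (hn : n ≠ 0) (hpow : ¬ ∃ m, n = p ^ m) :
    (X : R[X]) ^ n + (1 - X) ^ n ≠ 1 := by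
  have : Fact p.Prime := ⟨hp⟩
  obtain ⟨m, r, hpr, rfl⟩ := Nat.exists_eq_pow_mul_and_not_dvd hn p hp.ne_one
  have hr : 2 ≤ r := by
    have : r ≠ 0 := by rintro rfl; simp at hpr
    have : r ≠ 1 := by rintro rfl; exact hpow ⟨m, mul_one _⟩
    omega
  intro h
  refine X_pow_add_one_sub_X_pow_ne_one hr (by rwa [Ne, CharP.cast_eq_zero_iff R p]) ?_
  apply expand_injective (pow_pos hp.pos m)
  rw [expand_X_pow_add_one_sub_X_pow, h, map_one]

/-- In `F_p[t]`: `t^(p^m) + (1−t)^(p^m) = 1` for every `m ≥ 0`; conversely if `n ≥ 1`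
is not a power of `p` then `t^n + (1−t)^n ≠ 1`. -/
theorem stmt1 (p : ℕ) (hp : p.Prime) :
    (∀ m : ℕ, (Polynomial.X : Polynomial (ZMod p)) ^ (p ^ m)
        + (1 - Polynomial.X) ^ (p ^ m) = 1) ∧
    (∀ n : ℕ, 1 ≤ n → (¬ ∃ m : ℕ, n = p ^ m) →
      (Polynomial.X : Polynomial (ZMod p)) ^ n + (1 - Polynomial.X) ^ n ≠ 1) := by
  have : Fact p.Prime := ⟨hp⟩
  exact ⟨pow_expChar_pow_add_one_sub_pow p X, fun n hn =>
    X_pow_add_one_sub_X_pow_ne_one_of_ne_pow hp (Nat.one_le_iff_ne_zero.mp hn)⟩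
end

section
/- For a bounded linear operator Δ on a non-archimedean Banach space with ‖Δ‖ < R = p^{−1/(p−1)}, and for each i ≥ 0, the operator-valued binomial coefficient term B_i(T) := (T(T−1)⋯(T−i+1)/i!) Δ^i, viewed for T ranging over the closed unit disc (|T| ≤ 1), satisfies ‖B_i(T)‖ ≤ (‖Δ‖/R)^i; hence the series G(T) = Σ_{i≥0} B_i(T) converges uniformly in T with |T| ≤ 1 and defines, for each such T, a bounded operator with G(n) = (id + Δ)^n for every non-negative integer n. -/
/-!
In a non-archimedean field `‖T - j‖ ≤ 1` whenever `‖T‖ ≤ 1`, so the falling factorial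
`T(T-1)⋯(T-i+1)` has norm at most `1`; dividing by `i!` costs at most `R^{-i}`, which gives the
geometric bound `(‖Δ‖/R)^i` and hence absolute convergence. At `T = n` the coefficients are the
binomial coefficients `C(n,i)`, which vanish for `i > n`, so the series is the binomial expansion
of `(1 + Δ)^n`.
-/

open Finset

namespace IsUltrametricDist

section

variable {R : Type*} [NormedCommRing R] [NormOneClass R] [IsUltrametricDist R]

lemma norm_sub_natCast_le_one {T : R} (hT : ‖T‖ ≤ 1) (j : ℕ) : ‖T - j‖ ≤ 1 := by
  rw [sub_eq_add_neg]
  exact (norm_add_le_max T _).trans (max_le hT ((norm_neg _).trans_le (norm_natCast_le_one R j)))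

lemma norm_prod_range_sub_natCast_le_one {T : R} (hT : ‖T‖ ≤ 1) (i : ℕ) :
    ‖∏ j ∈ range i, (T - j)‖ ≤ 1 :=
  (Finset.norm_prod_le _ _).trans <|
    prod_le_one (fun _ _ ↦ norm_nonneg _) fun j _ ↦ norm_sub_natCast_le_one hT j

end

lemma norm_prod_range_sub_natCast_div_factorial_le {k : Type*} [NormedField k]
    [IsUltrametricDist k] {T : k} (hT : ‖T‖ ≤ 1) {R : ℝ} (hR : 0 < R) {i : ℕ}
    (hfact : R ^ i ≤ ‖(i.factorial : k)‖) :
    ‖(∏ j ∈ range i, (T - j)) / i.factorial‖ ≤ (R ^ i)⁻¹ := by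
  rw [norm_div, ← one_div]
  exact div_le_div₀ zero_le_one (norm_prod_range_sub_natCast_le_one hT i) (pow_pos hR i) hfact

end IsUltrametricDist

namespace ContinuousLinearMap

variable {k E : Type*} [NontriviallyNormedField k] [SeminormedAddCommGroup E] [NormedSpace k E]

lemma norm_pow_le_pow_norm (Δ : E →L[k] E) : ∀ i : ℕ, ‖Δ ^ i‖ ≤ ‖Δ‖ ^ i
  | 0 => by simp only [pow_zero]; exact norm_id_le
  | i + 1 => norm_pow_le' Δ i.succ_pos

lemma norm_smul_pow_le_div_pow (Δ : E →L[k] E) {c : k} {R : ℝ} {i : ℕ}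
    (hc : ‖c‖ ≤ (R ^ i)⁻¹) : ‖c • Δ ^ i‖ ≤ (‖Δ‖ / R) ^ i :=
  calc ‖c • Δ ^ i‖ ≤ ‖c‖ * ‖Δ ^ i‖ := norm_smul_le c _
    _ ≤ (R ^ i)⁻¹ * ‖Δ‖ ^ i :=
      mul_le_mul hc (Δ.norm_pow_le_pow_norm i) (norm_nonneg _) ((norm_nonneg c).trans hc)
    _ = (‖Δ‖ / R) ^ i := by rw [div_pow, inv_mul_eq_div]

end ContinuousLinearMap

lemma prod_range_natCast_sub_div_factorial {k : Type*} [Field k] (n : ℕ) {i : ℕ}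
    (hi : (i.factorial : k) ≠ 0) : (∏ j ∈ range i, ((n : k) - j)) / i.factorial = n.choose i := by
  rw [prod_range_natCast_sub, ← Nat.descFactorial_eq_prod_range,
    Nat.descFactorial_eq_factorial_mul_choose, Nat.cast_mul, mul_div_cancel_left₀ _ hi]

lemma tsum_choose_nsmul_pow {A : Type*} [Semiring A] [TopologicalSpace A] (a : A) (n : ℕ) :
    ∑' i, n.choose i • a ^ i = (1 + a) ^ n := by
  rw [tsum_eq_sum (s := range (n + 1)) fun i hi ↦ by
      rw [Nat.choose_eq_zero_of_lt (by simpa using hi), zero_smul],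
    add_comm 1 a, (Commute.one_right a).add_pow]
  refine sum_congr rfl fun i _ ↦ ?_
  rw [one_pow, mul_one, nsmul_eq_mul, (Nat.cast_commute _ _).eq]

theorem stmt13_general {k E : Type*} [NontriviallyNormedField k]
    [IsUltrametricDist k] [NormedAddCommGroup E] [NormedSpace k E] [CompleteSpace E]
    (p : ℕ)
    (hfact : ∀ i : ℕ,
      ((p : ℝ) ^ (-(1 : ℝ) / ((p : ℝ) - 1))) ^ i ≤ ‖((i.factorial : ℕ) : k)‖)
    (Δ : E →L[k] E) (hΔ : ‖Δ‖ < (p : ℝ) ^ (-(1 : ℝ) / ((p : ℝ) - 1))) :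
    (∀ T : k, ‖T‖ ≤ 1 →
      (∀ i : ℕ,
        ‖((∏ j ∈ Finset.range i, (T - (j : k))) / ((i.factorial : ℕ) : k)) • Δ ^ i‖
          ≤ (‖Δ‖ / (p : ℝ) ^ (-(1 : ℝ) / ((p : ℝ) - 1))) ^ i) ∧
      Summable (fun i : ℕ =>
        ((∏ j ∈ Finset.range i, (T - (j : k))) / ((i.factorial : ℕ) : k)) • Δ ^ i)) ∧
    (∀ n : ℕ,
      (∑' i : ℕ,
        ((∏ j ∈ Finset.range i, ((n : k) - (j : k))) / ((i.factorial : ℕ) : k)) • Δ ^ i)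
        = (1 + Δ) ^ n) := by
  set R : ℝ := (p : ℝ) ^ (-(1 : ℝ) / ((p : ℝ) - 1))
  have hR : 0 < R := (norm_nonneg Δ).trans_lt hΔ
  have hbound (T : k) (hT : ‖T‖ ≤ 1) (i : ℕ) :
      ‖((∏ j ∈ range i, (T - j)) / i.factorial) • Δ ^ i‖ ≤ (‖Δ‖ / R) ^ i :=
    Δ.norm_smul_pow_le_div_pow
      (IsUltrametricDist.norm_prod_range_sub_natCast_div_factorial_le hT hR (hfact i))
  refine ⟨fun T hT ↦ ⟨hbound T hT, .of_norm_bounded ?_ (hbound T hT)⟩, fun n ↦ ?_⟩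
  · exact summable_geometric_of_lt_one (by positivity) ((div_lt_one hR).2 hΔ)
  · have hfact_ne (i : ℕ) : (i.factorial : k) ≠ 0 :=
      norm_pos_iff.1 ((pow_pos hR i).trans_le (hfact i))
    simp_rw [prod_range_natCast_sub_div_factorial n (hfact_ne _), Nat.cast_smul_eq_nsmul]
    exact tsum_choose_nsmul_pow Δ n

/-- Interpolation of iterates: for `‖Δ‖ < R = p^{−1/(p−1)}` and `‖T‖ ≤ 1`, the
binomial terms `B_i(T) = (T(T−1)⋯(T−i+1)/i!) • Δ^i` satisfy `‖B_i(T)‖ ≤ (‖Δ‖/R)^i`,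
the series `G(T) = Σ_i B_i(T)` converges, and `G(n) = (id + Δ)^n` for every `n ∈ ℕ`. -/
theorem stmt13 {k E : Type*} [NontriviallyNormedField k] [CompleteSpace k]
    [IsUltrametricDist k] [NormedAddCommGroup E] [NormedSpace k E] [CompleteSpace E]
    (p : ℕ) (hp : p.Prime) (hpk : ‖(p : k)‖ = (p : ℝ)⁻¹)
    (hfact : ∀ i : ℕ,
      ((p : ℝ) ^ (-(1 : ℝ) / ((p : ℝ) - 1))) ^ i ≤ ‖((i.factorial : ℕ) : k)‖)
    (Δ : E →L[k] E) (hΔ : ‖Δ‖ < (p : ℝ) ^ (-(1 : ℝ) / ((p : ℝ) - 1))) :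
    (∀ T : k, ‖T‖ ≤ 1 →
      (∀ i : ℕ,
        ‖((∏ j ∈ Finset.range i, (T - (j : k))) / ((i.factorial : ℕ) : k)) • Δ ^ i‖
          ≤ (‖Δ‖ / (p : ℝ) ^ (-(1 : ℝ) / ((p : ℝ) - 1))) ^ i) ∧
      Summable (fun i : ℕ =>
        ((∏ j ∈ Finset.range i, (T - (j : k))) / ((i.factorial : ℕ) : k)) • Δ ^ i)) ∧
    (∀ n : ℕ,
      (∑' i : ℕ,
        ((∏ j ∈ Finset.range i, ((n : k) - (j : k))) / ((i.factorial : ℕ) : k)) • Δ ^ i)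
        = (1 + Δ) ^ n) :=
  stmt13_general p hfact Δ hΔ
end
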